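/- arXiv:1205.2771 — 6 statements merged into one kernel-verified Lean document; each statement's English description precedes it below -/
import Mathlib

section
/- Let n ≥ 2 and q ≥ 2 be integers. Let w : ℤ^n → ℤ^n be the ℤ-linear map w(x₁, …, xₙ) = (−xₙ, x₁, …, x_{n−1}) (so w has order 2n), and let e₁ ∈ ℤ^n be the first standard basis vector. Then for every integer r ≥ 0: if w^r(e₁) − e₁ lies in the image of the map x ↦ q·w(x) − x on ℤ^n, then 2n divides r. In other words, the class of e₁ in ℤ^n/(qw−1)ℤ^n has trivial stabilizer in the cyclic group generated by w. -/
/-!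
Let `N = q^n + 1` and let `φ = weightedSum` be the functional `φ(x) = ∑ qⁿ⁻¹⁻ⁱ xᵢ`.
A direct computation gives `q φ(w x) = φ(x) - N x_{n-1}`, so modulo `N` the functional `φ` kills
the image of `qw - 1` and turns `w` into multiplication by `q⁻¹` (a unit, since `qⁿ ≡ -1`).
Applying `φ` to `w^r e₁ - e₁ ∈ (qw - 1)ℤⁿ` gives `q^r ≡ 1 (mod N)`. Finally `q` has order exactly
`2n` modulo `N`: `q^{2n} ≡ 1`, while `0 < q^k - 1 < N` for `0 < k ≤ n`.
-/

/-- The signed cyclic shift `w(x₁, …, xₙ) = (−xₙ, x₁, …, x_{n−1})` on `ℤ^n`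
(the action of a Coxeter element of type `Bₙ`/`Cₙ` on the root lattice). -/
def signedShift (n : ℕ) [NeZero n] (x : Fin n → ℤ) : Fin n → ℤ :=
  fun i => if i = 0 then - x (i - 1) else x (i - 1)

lemma signedShift_zero {m : ℕ} (x : Fin (m + 1) → ℤ) :
    signedShift (m + 1) x 0 = -x (Fin.last m) := by
  have : (-1 : Fin (m + 1)) = Fin.last m := Fin.ext Fin.coe_neg_one
  rw [signedShift, if_pos rfl, zero_sub, this]

lemma signedShift_succ {m : ℕ} (x : Fin (m + 1) → ℤ) (i : Fin m) :
    signedShift (m + 1) x i.succ = x i.castSucc := by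
  have : (i.succ - 1 : Fin (m + 1)) = i.castSucc :=
    Fin.ext <| by
      rw [Fin.coe_sub_one, if_neg i.succ_ne_zero, Fin.val_succ, Nat.add_sub_cancel,
        Fin.val_castSucc]
  rw [signedShift, if_neg i.succ_ne_zero, this]

def weightedSum (q : ℤ) (m : ℕ) : (Fin (m + 1) → ℤ) →ₗ[ℤ] ℤ :=
  Fintype.linearCombination ℤ fun i => q ^ (m - i)

lemma weightedSum_apply (q : ℤ) (m : ℕ) (x : Fin (m + 1) → ℤ) :
    weightedSum q m x = ∑ i, x i * q ^ (m - i) :=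
  Fintype.linearCombination_apply ℤ _ x

lemma weightedSum_single_zero (q : ℤ) (m : ℕ) : weightedSum q m (Pi.single 0 1) = q ^ m := by
  rw [weightedSum, Fintype.linearCombination_apply_single, one_smul, Fin.val_zero, Nat.sub_zero]

lemma mul_weightedSum_signedShift (q : ℤ) (m : ℕ) (x : Fin (m + 1) → ℤ) :
    q * weightedSum q m (signedShift (m + 1) x) =
      weightedSum q m x - (q ^ (m + 1) + 1) * x (Fin.last m) := by
  have hpow (i : Fin m) : q * q ^ (m - (i + 1)) = q ^ (m - i) := by
    rw [← pow_succ', Nat.sub_add_eq, Nat.sub_add_cancel (Nat.sub_pos_of_lt i.isLt)]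
  rw [weightedSum_apply, weightedSum_apply, Fin.sum_univ_succ, Fin.sum_univ_castSucc]
  simp only [signedShift_zero, signedShift_succ, Fin.val_succ, Fin.val_castSucc, Fin.val_zero,
    Fin.val_last, Nat.sub_zero, Nat.sub_self, pow_zero, mul_add, Finset.mul_sum]
  simp only [mul_left_comm q, hpow]
  ring

section ModN

variable {q : ℤ} {m N : ℕ} (hN : (N : ℤ) = q ^ (m + 1) + 1)
include hN

lemma intCast_pow_eq_neg_one : (q : ZMod N) ^ (m + 1) = -1 := by
  have : ((q ^ (m + 1) + 1 : ℤ) : ZMod N) = 0 :=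
    (ZMod.intCast_zmod_eq_zero_iff_dvd _ N).2 (hN ▸ dvd_rfl)
  push_cast at this
  exact eq_neg_of_add_eq_zero_left this

lemma isUnit_intCast : IsUnit (q : ZMod N) :=
  IsUnit.of_mul_eq_one (-(q : ZMod N) ^ m) <| by
    rw [mul_neg, ← pow_succ', intCast_pow_eq_neg_one hN, neg_neg]

lemma intCast_mul_weightedSum_signedShift (x : Fin (m + 1) → ℤ) :
    (q : ZMod N) * (weightedSum q m (signedShift (m + 1) x) : ℤ) = (weightedSum q m x : ℤ) := by
  rw [← Int.cast_mul, mul_weightedSum_signedShift, ← hN, Int.cast_sub, Int.cast_mul,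
    Int.cast_natCast, ZMod.natCast_self, zero_mul, sub_zero]

lemma intCast_pow_mul_weightedSum_iterate (r : ℕ) (x : Fin (m + 1) → ℤ) :
    (q : ZMod N) ^ r * (weightedSum q m ((signedShift (m + 1))^[r] x) : ℤ) =
      (weightedSum q m x : ℤ) := by
  induction r with
  | zero => rw [pow_zero, one_mul, Function.iterate_zero_apply]
  | succ r ih =>
    rw [Function.iterate_succ_apply', pow_succ, mul_assoc,
      intCast_mul_weightedSum_signedShift hN, ih]

lemma intCast_weightedSum_mul_signedShift_sub_self (x : Fin (m + 1) → ℤ) :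
    (weightedSum q m (fun i => q * signedShift (m + 1) x i - x i) : ZMod N) = 0 := by
  have : (fun i => q * signedShift (m + 1) x i - x i) = q • signedShift (m + 1) x - x := rfl
  rw [this, map_sub, map_smul, smul_eq_mul, Int.cast_sub, Int.cast_mul,
    intCast_mul_weightedSum_signedShift hN, sub_self]

lemma orderOf_intCast_eq_two_mul (hq : 2 ≤ q) : orderOf (q : ZMod N) = 2 * (m + 1) := by
  have hpow : (q : ZMod N) ^ (2 * (m + 1)) = 1 := by
    rw [pow_mul', intCast_pow_eq_neg_one hN, neg_one_sq]
  have hpow_ne_one {k : ℕ} (hk : 0 < k) (hkm : k ≤ m + 1) : (q : ZMod N) ^ k ≠ 1 := by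
    intro h
    rw [eq_comm, ← Int.cast_pow, ← Int.cast_one, ZMod.intCast_eq_intCast_iff_dvd_sub, hN] at h
    have hgt : 1 < q ^ k := one_lt_pow₀ (by omega) hk.ne'
    have hle : q ^ k ≤ q ^ (m + 1) := pow_le_pow_right₀ (by omega) hkm
    have := Int.eq_zero_of_dvd_of_nonneg_of_lt (by omega) (by omega) h
    omega
  have hpos : 0 < orderOf (q : ZMod N) := orderOf_pos_iff.2 (isOfFinOrder_iff_pow_eq_one.2
    ⟨_, by omega, hpow⟩)
  have hgt : m + 1 < orderOf (q : ZMod N) := by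
    by_contra! hle
    exact hpow_ne_one hpos hle (pow_orderOf_eq_one _)
  exact (Nat.eq_of_dvd_of_lt_two_mul (by omega) (orderOf_dvd_of_pow_eq_one hpow) (by omega)).symm

end ModN

theorem stmt_4_general (n : ℕ) [NeZero n] (q : ℤ) (hq : 2 ≤ q) (r : ℕ)
    (h : ∃ x : Fin n → ℤ,
      (fun i => q * signedShift n x i - x i) =
        (signedShift n)^[r] (Pi.single 0 1) - Pi.single 0 1) :
    2 * n ∣ r := by
  obtain ⟨m, rfl⟩ := Nat.exists_eq_add_one_of_ne_zero (NeZero.ne n)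
  obtain ⟨x, hx⟩ := h
  obtain ⟨N, hN⟩ : ∃ N : ℕ, (N : ℤ) = q ^ (m + 1) + 1 :=
    ⟨_, Int.toNat_of_nonneg (by positivity)⟩
  have himage := intCast_weightedSum_mul_signedShift_sub_self hN x
  rw [hx, map_sub, weightedSum_single_zero, Int.cast_sub, sub_eq_zero] at himage
  have horbit := intCast_pow_mul_weightedSum_iterate hN r (Pi.single 0 1)
  rw [himage, weightedSum_single_zero, Int.cast_pow,
    ((isUnit_intCast hN).pow m).mul_eq_right] at horbit
  rw [← orderOf_intCast_eq_two_mul hN hq]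
  exact orderOf_dvd_of_pow_eq_one horbit

/-- For `n ≥ 2`, `q ≥ 2` and `r ≥ 0`: if `w^r(e₁) − e₁` lies in the image of
`x ↦ q·w(x) − x` on `ℤ^n`, where `w` is the signed cyclic shift, then `2n ∣ r`;
i.e. the class of `e₁` in `ℤ^n/(qw−1)ℤ^n` has trivial stabilizer in `⟨w⟩`. -/
theorem stmt_4 (n : ℕ) [NeZero n] (hn : 2 ≤ n) (q : ℤ) (hq : 2 ≤ q) (r : ℕ)
    (h : ∃ x : Fin n → ℤ,
      (fun i => q * signedShift n x i - x i) =
        (signedShift n)^[r] (Pi.single 0 1) - Pi.single 0 1) :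
    2 * n ∣ r :=
  stmt_4_general n q hq r h
end

section
/- Let n ≥ 2 and q ≥ 2 be integers. Let Λ = {x ∈ ℤ^n : x₁ + ⋯ + xₙ is even}, let w : ℤ^n → ℤ^n be the ℤ-linear map w(x₁, …, xₙ) = (−xₙ, x₁, …, x_{n−1}) (so w has order 2n and preserves Λ), and let e₁ ∈ ℤ^n be the first standard basis vector. Then for every integer r ≥ 0: if w^r(2e₁) − 2e₁ lies in the set {q·w(x) − x : x ∈ Λ}, then 2n divides r. -/
private lemma fin_succ_sub_one (m : ℕ) (i : Fin m) :
    (i.succ - 1 : Fin (m+1)) = i.castSucc := by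
  have hi := i.isLt
  ext
  rw [Fin.sub_def]
  simp only [Fin.val_succ, Fin.val_one', Fin.coe_castSucc]
  rw [Nat.mod_eq_of_lt (show 1 < m + 1 by omega)]
  have h2 : m + 1 - 1 + (i.val + 1) = i.val + (m+1) := by omega
  rw [h2, Nat.add_mod_right, Nat.mod_eq_of_lt (by omega)]

private lemma fin_zero_sub_one (m : ℕ) (hm : 0 < m) :
    (0 - 1 : Fin (m+1)) = Fin.last m := by
  ext
  rw [Fin.sub_def]
  simp only [Fin.val_zero, Fin.val_one', Fin.val_last]
  rw [Nat.mod_eq_of_lt (show 1 < m + 1 by omega)]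
  have h2 : m + 1 - 1 + 0 = m := by omega
  rw [h2, Nat.mod_eq_of_lt (by omega)]

/-- Key identity: applying the "evaluation at `q⁻¹`" functional to a shifted vector. -/
private lemma shift_sum (m : ℕ) (hm : 0 < m) (q : ℤ) (y : Fin (m+1) → ℤ) :
    q * ∑ i : Fin (m+1), q ^ (m - (i : ℕ)) * signedShift (m+1) y i
      = (∑ i : Fin (m+1), q ^ (m - (i : ℕ)) * y i)
        - (q ^ (m+1) + 1) * y (Fin.last m) := by
  have h0 : signedShift (m+1) y 0 = - y (Fin.last m) := by
    simp [signedShift, fin_zero_sub_one m hm]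
  have hsucc : ∀ i : Fin m, signedShift (m+1) y i.succ = y i.castSucc := by
    intro i
    simp [signedShift, Fin.succ_ne_zero, fin_succ_sub_one m i]
  rw [Fin.sum_univ_succ (f := fun i : Fin (m+1) => q ^ (m - (i:ℕ)) * signedShift (m+1) y i),
    Fin.sum_univ_castSucc (f := fun i : Fin (m+1) => q ^ (m - (i:ℕ)) * y i)]
  rw [h0, mul_add, Finset.mul_sum]
  have hterm : ∀ i : Fin m,
      q * (q ^ (m - ((i.succ : Fin (m+1)) : ℕ)) * signedShift (m+1) y i.succ)
        = q ^ (m - (i.castSucc : Fin (m+1)).val) * y i.castSucc := by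
    intro i
    have hi := i.isLt
    rw [hsucc i, Fin.val_succ, Fin.coe_castSucc]
    have h3 : m - i.val = (m - (i.val+1)) + 1 := by omega
    rw [h3, pow_succ]
    ring
  rw [Finset.sum_congr rfl fun i _ => hterm i]
  simp only [Fin.val_zero, Fin.val_last, Nat.sub_zero, Nat.sub_self, pow_zero, one_mul]
  ring

/-- Number-theoretic core: if `q^n + 1 ∣ 2(q^r − 1)` with `n, q ≥ 2`, then `2n ∣ r`. -/
private lemma nt_core (n : ℕ) (hn : 2 ≤ n) (q : ℤ) (hq : 2 ≤ q) (r : ℕ)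
    (h : (q^n + 1) ∣ 2*(q^r - 1)) : 2*n ∣ r := by
  have hq1 : (1:ℤ) ≤ q := by linarith
  have hqn4 : (4:ℤ) ≤ q^n := by
    calc (4:ℤ) = 2^2 := by norm_num
    _ ≤ q^2 := pow_le_pow_left₀ (by norm_num) hq 2
    _ ≤ q^n := pow_le_pow_right₀ hq1 hn
  set s := r % (2*n) with hsdef
  have hslt : s < 2*n := Nat.mod_lt _ (by omega)
  have hdecomp : 2*n*(r/(2*n)) + s = r := Nat.div_add_mod r (2*n)
  have h2n : (q^n+1) ∣ q^(2*n) - 1 := ⟨q^n - 1, by rw [two_mul, pow_add]; ring⟩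
  have hpow : (q^n+1) ∣ q^r - q^s := by
    have h3 : (q^n+1) ∣ (q^(2*n))^(r/(2*n)) - 1 := by
      have h4 := sub_dvd_pow_sub_pow (q^(2*n)) 1 (r/(2*n))
      rw [one_pow] at h4
      exact h2n.trans h4
    have hqr : q^r = (q^(2*n))^(r/(2*n)) * q^s := by
      rw [← pow_mul, ← pow_add, hdecomp]
    have h5 : q^r - q^s = q^s * ((q^(2*n))^(r/(2*n)) - 1) := by
      rw [hqr]; ring
    rw [h5]
    exact h3.mul_left _
  have hs2 : (q^n+1) ∣ 2*(q^s - 1) := by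
    have h6 : 2*(q^s-1) = 2*(q^r-1) - 2*(q^r - q^s) := by ring
    rw [h6]
    exact dvd_sub h (hpow.mul_left 2)
  have hMpos : (0:ℤ) < q^n+1 := by linarith
  have hs0 : s = 0 := by
    by_contra hs0
    rcases le_or_gt s n with hsn | hns
    · -- 1 ≤ s ≤ n
      have h1 : (2:ℤ) ≤ q^s := le_trans hq (le_self_pow₀ hq1 hs0)
      have h2 : q^s ≤ q^n := pow_le_pow_right₀ hq1 hsn
      have hDpos : (0:ℤ) < 2*(q^s-1) := by linarith
      have hMle : q^n+1 ≤ 2*(q^s-1) := Int.le_of_dvd hDpos hs2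
      have hzero : 2*(q^s-1) - (q^n+1) = 0 := by
        refine Int.eq_zero_of_abs_lt_dvd (dvd_sub hs2 dvd_rfl) ?_
        rw [abs_of_nonneg (by linarith)]
        linarith
      have heq : 2*q^s = q^n + 3 := by linarith
      have hdvd3 : q^s ∣ (3:ℤ) := by
        have h4 : q^s ∣ q^n := pow_dvd_pow q hsn
        have h5 : (3:ℤ) = 2*q^s - q^n := by linarith
        rw [h5]
        exact dvd_sub (Dvd.intro_left 2 rfl) h4
      have := Int.le_of_dvd (by norm_num) hdvd3
      linarith
    · -- n < s < 2n
      have hqu : q^s = q^n * q^(s-n) := by rw [← pow_add]; congr 1; omega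
      have hs3 : (q^n+1) ∣ 2*(q^(s-n)+1) := by
        have h7 : 2*(q^(s-n)+1) = (q^n+1)*(2*q^(s-n)) - 2*(q^s - 1) := by
          rw [hqu]; ring
        rw [h7]
        exact dvd_sub (dvd_mul_right _ _) hs2
      have h1 : (2:ℤ) ≤ q^(s-n) := le_trans hq (le_self_pow₀ hq1 (by omega))
      have h2 : q^(s-n) ≤ q^(n-1) := pow_le_pow_right₀ hq1 (by omega)
      have h3 : 2*q^(n-1) ≤ q^n := by
        have h8 : q^n = q * q^(n-1) := by
          rw [← pow_succ']; congr 1; omega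
        have h9 : (0:ℤ) < q^(n-1) := pow_pos (by linarith) _
        nlinarith
      have hDpos : (0:ℤ) < 2*(q^(s-n)+1) := by linarith
      have hMle : q^n+1 ≤ 2*(q^(s-n)+1) := Int.le_of_dvd hDpos hs3
      have hzero : 2*(q^(s-n)+1) - (q^n+1) = 0 := by
        refine Int.eq_zero_of_abs_lt_dvd (dvd_sub hs3 dvd_rfl) ?_
        rw [abs_of_nonneg (by linarith)]
        linarith
      have heq : q^n = 2*q^(s-n) + 1 := by linarith
      have hdq : q ∣ (1:ℤ) := by
        have hd1 : q ∣ q^n := dvd_pow_self q (by omega)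
        have hd2 : q ∣ 2*q^(s-n) := (dvd_pow_self q (by omega)).mul_left 2
        have h10 : (1:ℤ) = q^n - 2*q^(s-n) := by linarith
        rw [h10]
        exact dvd_sub hd1 hd2
      have := Int.le_of_dvd one_pos hdq
      linarith
  exact Nat.dvd_of_mod_eq_zero hs0

/-- For `n ≥ 2`, `q ≥ 2` and `r ≥ 0`: if `w^r(2e₁) − 2e₁` lies in
`{q·w(x) − x : x ∈ Λ}`, where `Λ ⊆ ℤ^n` is the lattice of vectors with even
coordinate sum and `w` is the signed cyclic shift, then `2n ∣ r`. -/
theorem stmt_5 (n : ℕ) [NeZero n] (hn : 2 ≤ n) (q : ℤ) (hq : 2 ≤ q) (r : ℕ)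
    (h : ∃ x : Fin n → ℤ, Even (∑ i, x i) ∧
      (fun i => q * signedShift n x i - x i) =
        (signedShift n)^[r] (Pi.single 0 2) - Pi.single 0 2) :
    2 * n ∣ r := by
  obtain ⟨m, rfl⟩ : ∃ m, n = m + 1 := ⟨n - 1, by omega⟩
  have hm : 0 < m := by omega
  obtain ⟨x, -, heq⟩ := h
  set w := signedShift (m+1) with hw
  set v : Fin (m+1) → ℤ := Pi.single 0 2 with hv
  set M : ℤ := q^(m+1) + 1 with hM
  -- the functional L f = ∑ q^(m-i) f i
  set L : (Fin (m+1) → ℤ) → ℤ := fun f => ∑ i : Fin (m+1), q ^ (m - (i:ℕ)) * f i with hL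
  have hLv : L v = q^m * 2 := by
    have hrfl : L v = ∑ i : Fin (m+1), q ^ (m - (i:ℕ)) * v i := rfl
    rw [hrfl, hv]
    rw [Finset.sum_eq_single (0 : Fin (m+1))]
    · simp
    · intro b _ hb
      simp [Pi.single_eq_of_ne hb]
    · simp
  -- key recursion
  have key : ∀ k : ℕ, M ∣ q^k * L (w^[k] v) - q^m * 2 := by
    intro k
    induction k with
    | zero => simp [hLv]
    | succ k ih =>
      have hs := shift_sum m hm q (w^[k] v)
      have hstep : q^(k+1) * L (w^[k+1] v) - q^m * 2
          = (q^k * L (w^[k] v) - q^m * 2)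
            - M * (q^k * ((w^[k] v) (Fin.last m))) := by
        rw [Function.iterate_succ_apply', pow_succ, hL, hM]
        have : q * ∑ i : Fin (m+1), q ^ (m - (i:ℕ)) * (w ((w^[k]) v)) i
            = (∑ i : Fin (m+1), q ^ (m - (i:ℕ)) * ((w^[k]) v) i)
              - (q ^ (m+1) + 1) * ((w^[k]) v) (Fin.last m) := hs
        linear_combination q^k * this
      rw [hstep]
      exact dvd_sub ih (Dvd.intro _ rfl)
  -- apply L to the hypothesis
  have hsum : q * L (w x) - L x = L (w^[r] v) - L v := by
    have h1 : ∀ i : Fin (m+1), q * w x i - x i = (w^[r] v) i - v i := by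
      intro i
      have := congrFun heq i
      simpa using this
    have h2 : ∀ i : Fin (m+1), q ^ (m - (i:ℕ)) * (q * w x i - x i)
        = q ^ (m - (i:ℕ)) * ((w^[r] v) i - v i) := fun i => by rw [h1 i]
    have h3 := Finset.sum_congr rfl (fun i (_ : i ∈ Finset.univ) => h2 i)
    rw [hL]
    have h4 : ∑ i : Fin (m+1), q ^ (m - (i:ℕ)) * (q * w x i - x i)
        = q * (∑ i : Fin (m+1), q ^ (m - (i:ℕ)) * w x i)
          - ∑ i : Fin (m+1), q ^ (m - (i:ℕ)) * x i := by
      rw [Finset.mul_sum, ← Finset.sum_sub_distrib]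
      exact Finset.sum_congr rfl fun i _ => by ring
    have h5 : ∑ i : Fin (m+1), q ^ (m - (i:ℕ)) * ((w^[r] v) i - v i)
        = (∑ i : Fin (m+1), q ^ (m - (i:ℕ)) * (w^[r] v) i)
          - ∑ i : Fin (m+1), q ^ (m - (i:ℕ)) * v i := by
      rw [← Finset.sum_sub_distrib]
      exact Finset.sum_congr rfl fun i _ => by ring
    rw [← h4, ← h5]
    exact h3
  have hshift := shift_sum m hm q x
  have hdvd1 : M ∣ L (w^[r] v) - q^m * 2 := by
    refine ⟨- x (Fin.last m), ?_⟩
    have : q * L (w x) - L x = - M * x (Fin.last m) := by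
      rw [hL, hM]
      linear_combination hshift
    rw [← hLv]
    linarith [hsum, this]
  have hdvd2 : M ∣ 2 * q^m * (q^r - 1) := by
    have h1 : M ∣ q^r * (L (w^[r] v) - q^m * 2) := hdvd1.mul_left _
    have h2 := key r
    have h3 : 2 * q^m * (q^r - 1)
        = (q^r * L (w^[r] v) - q^m * 2) - q^r * (L (w^[r] v) - q^m * 2) := by
      ring
    rw [h3]
    exact dvd_sub h2 h1
  have hdvd3 : M ∣ 2 * (q^r - 1) := by
    have h1 : M ∣ q * (2 * q^m * (q^r - 1)) := hdvd2.mul_left q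
    have h2 : 2 * (q^r - 1) = M * (2 * (q^r - 1)) - q * (2 * q^m * (q^r - 1)) := by
      rw [hM]; ring
    rw [h2]
    exact dvd_sub (dvd_mul_right _ _) h1
  exact nt_core (m+1) hn q hq r (by rw [← hM]; exact hdvd3)
end

section
/- Let n ≥ 1 and q ≥ 2 be integers. Let Λ = {x ∈ ℤ^{n+1} : x₁ + ⋯ + x_{n+1} = 0}, let w : ℤ^{n+1} → ℤ^{n+1} be the cyclic shift w(x₁, …, x_{n+1}) = (x_{n+1}, x₁, …, xₙ) (so w has order n+1 and preserves Λ), and set v = e₁ − e_{n+1}, the difference of the first and last standard basis vectors. Then for every integer r ≥ 0: if w^r(v) − v lies in the set {q·w(x) − x : x ∈ Λ}, then n+1 divides r. -/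
/-!
Identify `ℤ^N` with the group ring `ℤ[t]/(t^N - 1)`, on which the shift `w` is multiplication
by `t`, and evaluate at `t = q⁻¹` in `ℤ/(q^N - 1)`, where `q` is a unit of order dividing `N`.
This kills `q·w(x) − x`, and sends `w^r(v) − v` to `(q^{-r} − 1)(1 − q)`, so the hypothesis gives
`q^N − 1 ∣ (q^s − 1)(q − 1)` with `s = r mod N`. For `0 < s < N` the right-hand side is positive and
smaller than `q^N − 1`, which is impossible.
-/

/-- The cyclic shift `w(x₁, …, xₙ) = (xₙ, x₁, …, x_{n−1})` on `ℤ^n`. -/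
def cycShift (n : ℕ) [NeZero n] (x : Fin n → ℤ) : Fin n → ℤ :=
  fun i => x (i - 1)

section PowEval

variable {R : Type*} [CommRing R]

/-- The ring map `ℤ[t]/(t^N - 1) → R`, `t ↦ u`, on coefficient vectors. -/
def powEval (N : ℕ) (u : R) (y : Fin N → ℤ) : R :=
  ∑ i, y i * u ^ (i : ℕ)

variable {N : ℕ} {u : R}

theorem pow_finVal_add (hu : u ^ N = 1) (a b : Fin N) :
    u ^ ((a + b : Fin N) : ℕ) = u ^ (a : ℕ) * u ^ (b : ℕ) := by
  rw [Fin.val_add, ← pow_eq_pow_mod _ hu, pow_add]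

theorem powEval_cycShift [NeZero N] (hu : u ^ N = 1) (y : Fin N → ℤ) :
    powEval N u (cycShift N y) = u * powEval N u y := by
  have hu1 : u ^ ((1 : Fin N) : ℕ) = u := by
    rw [Fin.val_one', ← pow_eq_pow_mod _ hu, pow_one]
  rw [powEval, powEval, Finset.mul_sum, ← Equiv.sum_comp (Equiv.addRight (1 : Fin N))]
  refine Finset.sum_congr rfl fun i _ => ?_
  simp only [cycShift, Equiv.coe_addRight, add_sub_cancel_right, pow_finVal_add hu, hu1]
  ring

theorem powEval_iterate_cycShift [NeZero N] (hu : u ^ N = 1) (r : ℕ) (y : Fin N → ℤ) :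
    powEval N u ((cycShift N)^[r] y) = u ^ r * powEval N u y := by
  induction r with
  | zero => simp
  | succ r ih => rw [Function.iterate_succ_apply', powEval_cycShift hu, ih, pow_succ', mul_assoc]

theorem powEval_sub (y z : Fin N → ℤ) : powEval N u (y - z) = powEval N u y - powEval N u z := by
  simp only [powEval, Pi.sub_apply, Int.cast_sub, sub_mul, Finset.sum_sub_distrib]

theorem powEval_smul_cycShift_sub [NeZero N] {q : ℤ} (hqu : q * u = 1) (hu : u ^ N = 1)
    (x : Fin N → ℤ) : powEval N u (fun i => q * cycShift N x i - x i) = 0 := by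
  have hsplit : (fun i => q * cycShift N x i - x i) = q • cycShift N x - x := rfl
  have hsmul : powEval N u (q • cycShift N x) = q * powEval N u (cycShift N x) := by
    simp only [powEval, Pi.smul_apply, smul_eq_mul, Int.cast_mul, Finset.mul_sum, mul_assoc]
  rw [hsplit, powEval_sub, hsmul, powEval_cycShift hu, ← mul_assoc, hqu, one_mul, sub_self]

theorem powEval_single_zero_sub_single_last (n : ℕ) :
    powEval (n + 1) u (Pi.single 0 1 - Pi.single (Fin.last n) 1) = 1 - u ^ n := by
  simp [powEval, Pi.single_apply, sub_mul, ite_mul, Finset.sum_sub_distrib]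

theorem pow_mod_sub_one_mul_sub_one_eq_zero {n : ℕ} {q : ℤ} (hqu : q * u = 1)
    (hu : u ^ (n + 1) = 1) {r : ℕ} {x : Fin (n + 1) → ℤ}
    (hx : (fun i => q * cycShift (n + 1) x i - x i) =
      (cycShift (n + 1))^[r] (Pi.single 0 1 - Pi.single (Fin.last n) 1)
        - (Pi.single 0 1 - Pi.single (Fin.last n) 1)) :
    ((q : R) ^ (r % (n + 1)) - 1) * (q - 1) = 0 := by
  have hval := congrArg (powEval (n + 1) u) hx
  rw [powEval_smul_cycShift_sub hqu hu, powEval_sub, powEval_iterate_cycShift hu,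
    powEval_single_zero_sub_single_last] at hval
  have hun : u ^ n = q := by
    calc u ^ n = u ^ n * (q * u) := by rw [hqu, mul_one]
      _ = q * u ^ (n + 1) := by ring
      _ = q := by rw [hu, mul_one]
  have hqN : (q : R) ^ (n + 1) = 1 := by
    calc (q : R) ^ (n + 1) = (q * u) ^ (n + 1) := by rw [mul_pow, hu, mul_one]
      _ = 1 := by rw [hqu, one_pow]
  have hqur : (q : R) ^ r * u ^ r = 1 := by rw [← mul_pow, hqu, one_pow]
  rw [hun] at hval
  rw [← pow_eq_pow_mod _ hqN]
  linear_combination -(q : R) ^ r * hval + ((q : R) - 1) * hqur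

end PowEval

theorem pow_sub_one_not_dvd {q : ℤ} (hq : 2 ≤ q) {s N : ℕ} (hs : 0 < s) (hsN : s < N) :
    ¬ q ^ N - 1 ∣ (q ^ s - 1) * (q - 1) := by
  have hqs : 2 ≤ q ^ s := le_trans hq (le_self_pow₀ (by linarith) hs.ne')
  have hqsN : q ^ s * q ≤ q ^ N := by
    rw [← pow_succ]; exact pow_le_pow_right₀ (by linarith) hsN
  intro hdvd
  have hpos : 0 < (q ^ s - 1) * (q - 1) := mul_pos (by linarith) (by linarith)
  have hle := Int.le_of_dvd hpos hdvd
  nlinarith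

theorem pow_succ_sub_one_dvd_of_eq_iterate_cycShift {n : ℕ} {q : ℤ} {r : ℕ}
    {x : Fin (n + 1) → ℤ}
    (hx : (fun i => q * cycShift (n + 1) x i - x i) =
      (cycShift (n + 1))^[r] (Pi.single 0 1 - Pi.single (Fin.last n) 1)
        - (Pi.single 0 1 - Pi.single (Fin.last n) 1)) :
    q ^ (n + 1) - 1 ∣ (q ^ (r % (n + 1)) - 1) * (q - 1) := by
  let mk := Ideal.Quotient.mk (Ideal.span {q ^ (n + 1) - 1})
  have hqN : mk (q ^ (n + 1)) = 1 := by
    rw [← sub_eq_zero, ← map_one mk, ← map_sub, Ideal.Quotient.eq_zero_iff_dvd]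
  have hqu : (q : ℤ ⧸ _) * mk (q ^ n) = 1 := by
    rw [← eq_intCast mk q, ← map_mul, ← pow_succ', hqN]
  have hu : mk (q ^ n) ^ (n + 1) = 1 := by
    rw [← map_pow, ← pow_mul, mul_comm, pow_mul, map_pow, hqN, one_pow]
  have hzero := pow_mod_sub_one_mul_sub_one_eq_zero hqu hu hx
  rwa [← eq_intCast mk q, ← map_pow, ← map_one mk, ← map_sub, ← map_sub, ← map_mul,
    Ideal.Quotient.eq_zero_iff_dvd] at hzero

theorem stmt_6_general (n : ℕ) (q : ℤ) (hq : 2 ≤ q) (r : ℕ)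
    (h : ∃ x : Fin (n + 1) → ℤ, (∑ i, x i) = 0 ∧
      (fun i => q * cycShift (n + 1) x i - x i) =
        (cycShift (n + 1))^[r] (Pi.single 0 1 - Pi.single (Fin.last n) 1)
          - (Pi.single 0 1 - Pi.single (Fin.last n) 1)) :
    n + 1 ∣ r := by
  obtain ⟨x, -, hx⟩ := h
  by_contra hndvd
  have hs : 0 < r % (n + 1) := Nat.pos_of_ne_zero fun h0 => hndvd (Nat.dvd_of_mod_eq_zero h0)
  exact pow_sub_one_not_dvd hq hs (Nat.mod_lt _ n.succ_pos)
    (pow_succ_sub_one_dvd_of_eq_iterate_cycShift hx)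

/-- For `n ≥ 1`, `q ≥ 2` and `r ≥ 0`: if `w^r(v) − v` lies in
`{q·w(x) − x : x ∈ Λ}`, where `Λ ⊆ ℤ^{n+1}` is the lattice of sum-zero vectors,
`w` is the cyclic shift and `v = e₁ − e_{n+1}`, then `n+1 ∣ r`. -/
theorem stmt_6 (n : ℕ) (hn : 1 ≤ n) (q : ℤ) (hq : 2 ≤ q) (r : ℕ)
    (h : ∃ x : Fin (n + 1) → ℤ, (∑ i, x i) = 0 ∧
      (fun i => q * cycShift (n + 1) x i - x i) =
        (cycShift (n + 1))^[r] (Pi.single 0 1 - Pi.single (Fin.last n) 1)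
          - (Pi.single 0 1 - Pi.single (Fin.last n) 1)) :
    n + 1 ∣ r :=
  stmt_6_general n q hq r h
end

section
/- Let n ≥ 4 and q ≥ 2 be integers and set m = n−1. Let Λ = {x ∈ ℤ^n : x₁ + ⋯ + xₙ is even} and let w' : ℤ^n → ℤ^n be the ℤ-linear map defined by w'(x)₁ = x_m, w'(x)_i = x_{i−1} for 2 ≤ i ≤ m−1, w'(x)_m = −x_{m−1}, and w'(x)_n = −x_n (note w' preserves Λ). Then for every sign η ∈ {1, −1} and every j with 1 ≤ j ≤ m: if 2η·e_j − 2e_m lies in the set {q·w'(x) − x : x ∈ Λ}, then η = 1 and j = m. -/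
/-- For `m = n − 1`, the ℤ-linear map `w' : ℤ^n → ℤ^n` given (in 1-based
coordinates) by `w'(x)₁ = x_m`, `w'(x)_i = x_{i−1}` for `2 ≤ i ≤ m−1`,
`w'(x)_m = −x_{m−1}` and `w'(x)_n = −x_n` (the action of the Weyl group element
`w' = tₙ t_m (1 2 … m)` of type `Dₙ` on the character lattice). -/
def wDmap (n : ℕ) (x : Fin n → ℤ) : Fin n → ℤ := fun i =>
  if (i : ℕ) = 0 then x ⟨n - 2, by have := i.isLt; omega⟩
  else if (i : ℕ) = n - 2 then - x ⟨n - 3, by have := i.isLt; omega⟩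
  else if (i : ℕ) = n - 1 then - x ⟨n - 1, by have := i.isLt; omega⟩
  else x ⟨(i : ℕ) - 1, by have := i.isLt; omega⟩

private def XX (n : ℕ) (x : Fin n → ℤ) (k : ℕ) : ℤ :=
  if hk : k < n then x ⟨k, hk⟩ else 0

private def dd (η : ℤ) (j n k : ℕ) : ℤ :=
  (if k = j - 1 then 2 * η else 0) - (if k = n - 2 then 2 else 0)

private lemma contraSmall (q : ℤ) (hq : 2 ≤ q) (m : ℕ) (_hm : 3 ≤ m) (V c : ℤ)
    (hV1 : 0 < V) (hV2 : V < q ^ m + 1) (h : (q ^ m + 1) * c = V) : False := by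
  have hA : 0 < q ^ m := by positivity
  rcases le_or_gt c 0 with h1 | h1
  · nlinarith
  · have h2 : 1 ≤ c := h1
    nlinarith

private lemma contraMain (q : ℤ) (hq : 2 ≤ q) (m : ℕ) (hm : 3 ≤ m) (η : ℤ)
    (hη : η = 1 ∨ η = -1) (s : ℕ) (hs2 : 2 ≤ s) (hs : s ≤ m - 1) (c : ℤ)
    (h : (q ^ m + 1) * c = 2 * η * q ^ s + 2 * q) : False := by
  have hq1 : (1:ℤ) ≤ q := by omega
  have hB : q ^ 2 ≤ q ^ s := pow_le_pow_right₀ hq1 hs2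
  have hBC : q ^ s ≤ q ^ (m - 1) := pow_le_pow_right₀ hq1 hs
  have hC2 : q ^ 2 ≤ q ^ (m - 1) := pow_le_pow_right₀ hq1 (by omega)
  have hAC : q ^ m = q ^ (m - 1) * q := by
    rw [← pow_succ]; congr 1; omega
  have hq2 : (4:ℤ) ≤ q ^ 2 := by nlinarith
  have hBpos : (0:ℤ) < q ^ s := by positivity
  have hCpos : (0:ℤ) < q ^ (m - 1) := by positivity
  have hApos : (0:ℤ) < q ^ m := by positivity
  rcases hη with rfl | rfl
  · rcases le_or_gt q 2 with hq2' | hq3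
    · have hq' : q = 2 := le_antisymm hq2' hq
      subst hq'
      rcases (show c ≤ 0 ∨ c = 1 ∨ 2 ≤ c by omega) with hc | hc | hc
      · have h3 : ((2:ℤ) ^ m + 1) * c ≤ 0 :=
          mul_nonpos_of_nonneg_of_nonpos (by positivity) hc
        nlinarith
      · subst hc
        have h4 : (2:ℤ) ∣ 1 := ⟨2 ^ s + 2 - 2 ^ (m - 1), by linarith⟩
        norm_num at h4
      · nlinarith
    · have hkey : q ^ 2 * (q - 2) ≤ q ^ (m - 1) * (q - 2) :=
        mul_le_mul_of_nonneg_right hC2 (by omega)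
      have hlt : 2 * 1 * q ^ s + 2 * q < q ^ m + 1 := by nlinarith
      rcases le_or_gt c 0 with hc | hc
      · have h3 : (q ^ m + 1) * c ≤ 0 :=
          mul_nonpos_of_nonneg_of_nonpos (by positivity) hc
        nlinarith
      · have h2 : 1 ≤ c := hc
        nlinarith
  · have hub : 2 * q ^ s - 2 * q < q ^ m + 1 := by nlinarith
    have hneg : 2 * (-1) * q ^ s + 2 * q < 0 := by nlinarith
    rcases lt_trichotomy c 0 with hc | hc | hc
    · have hc1 : c ≤ -1 := by omega
      nlinarith
    · subst hc; nlinarith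
    · have hc1 : 1 ≤ c := hc
      nlinarith

/-- For `n ≥ 4`, `q ≥ 2`, `m = n − 1`, a sign `η ∈ {1, −1}` and `1 ≤ j ≤ m`:
if `2η·e_j − 2e_m` lies in `{q·w'(x) − x : x ∈ Λ}`, where `Λ ⊆ ℤ^n` is the
lattice of vectors with even coordinate sum, then `η = 1` and `j = m`
(the class of `2e_m` in `Λ/(w'Φ−1)Λ` is in general position). -/
theorem stmt_9 (n : ℕ) (hn : 4 ≤ n) (q : ℤ) (hq : 2 ≤ q)
    (η : ℤ) (hη : η = 1 ∨ η = -1) (j : ℕ) (hj1 : 1 ≤ j) (hj2 : j ≤ n - 1)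
    (h : ∃ x : Fin n → ℤ, Even (∑ i, x i) ∧
      (fun i => q * wDmap n x i - x i) =
        Pi.single (⟨j - 1, by omega⟩ : Fin n) (2 * η)
          - Pi.single (⟨n - 2, by omega⟩ : Fin n) 2) :
    η = 1 ∧ j = n - 1 := by
  obtain ⟨x, -, heq⟩ := h
  have hXX : ∀ (k : ℕ) (hk : k < n), XX n x k = x ⟨k, hk⟩ := fun k hk => dif_pos hk
  have key : ∀ (k : ℕ) (hk : k < n),
      q * wDmap n x ⟨k, hk⟩ - x ⟨k, hk⟩ = dd η j n k := by
    intro k hk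
    have h1 := congrFun heq ⟨k, hk⟩
    simp only [Pi.sub_apply, Pi.single_apply, Fin.mk.injEq] at h1
    simpa [dd] using h1
  -- the three kinds of scalar equations
  have E0 : q * XX n x (n - 2) - XX n x 0 = dd η j n 0 := by
    have h1 := key 0 (by omega)
    have e1 : wDmap n x ⟨0, by omega⟩ = x ⟨n - 2, by omega⟩ := by simp [wDmap]
    rw [e1, ← hXX (n - 2) (by omega), ← hXX 0 (by omega)] at h1
    exact h1
  have Em : q * (-(XX n x (n - 3))) - XX n x (n - 2) = dd η j n (n - 2) := by
    have h1 := key (n - 2) (by omega)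
    have e1 : wDmap n x ⟨n - 2, by omega⟩ = - x ⟨n - 3, by omega⟩ := by
      simp [wDmap, show n - 2 ≠ 0 by omega]
    rw [e1, ← hXX (n - 3) (by omega), ← hXX (n - 2) (by omega)] at h1
    exact h1
  have Emid : ∀ (k : ℕ), 1 ≤ k → k ≤ n - 3 →
      q * XX n x (k - 1) - XX n x k = dd η j n k := by
    intro k h1 h2
    have h3 := key k (by omega)
    have e1 : wDmap n x ⟨k, by omega⟩ = x ⟨k - 1, by omega⟩ := by
      simp [wDmap, show k ≠ 0 by omega, show k ≠ n - 2 by omega, show k ≠ n - 1 by omega]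
    rw [e1, ← hXX (k - 1) (by omega), ← hXX k (by omega)] at h3
    exact h3
  -- telescoping
  have main : ∀ t : ℕ, t ≤ n - 3 → q ^ (n - 2 - t) * XX n x t =
      q ^ (n - 2) * XX n x 0 - ∑ k ∈ Finset.Icc 1 t, q ^ (n - 2 - k) * dd η j n k := by
    intro t
    induction t with
    | zero => intro _; simp
    | succ t ih =>
      intro ht
      have ih' := ih (by omega)
      rw [Finset.sum_Icc_succ_top (by omega : 1 ≤ t + 1)]
      have hmid := Emid (t + 1) (by omega) ht
      simp only [Nat.add_sub_cancel] at hmid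
      have hX : XX n x (t + 1) = q * XX n x t - dd η j n (t + 1) := by linarith
      have hexp : n - 2 - t = (n - 2 - (t + 1)) + 1 := by omega
      rw [hexp, pow_succ] at ih'
      rw [hX]
      linear_combination ih'
  have h1 := main (n - 3) (le_refl _)
  rw [show n - 2 - (n - 3) = 1 by omega, pow_one] at h1
  have final : (q ^ (n - 1) + 1) * XX n x 0 =
      q * (∑ k ∈ Finset.Icc 1 (n - 3), q ^ (n - 2 - k) * dd η j n k)
        - q * dd η j n (n - 2) - dd η j n 0 := by
    have hp : q ^ (n - 1) = q ^ (n - 2) * q := by rw [← pow_succ]; congr 1; omega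
    rw [hp]
    linear_combination (-q) * h1 + (-q) * Em + (-1 : ℤ) * E0
  have hq3 : q ^ 3 ≤ q ^ (n - 1) := pow_le_pow_right₀ (by omega) (by omega)
  have hq4 : 4 * q ≤ q ^ 3 := by
    nlinarith [mul_nonneg (mul_nonneg (show (0:ℤ) ≤ q - 2 by omega)
        (show (0:ℤ) ≤ q by omega)) (show (0:ℤ) ≤ q by omega),
      mul_nonneg (show (0:ℤ) ≤ q - 2 by omega) (show (0:ℤ) ≤ q by omega)]
  rcases (show j = 1 ∨ (2 ≤ j ∧ j ≤ n - 2) ∨ j = n - 1 by omega) with hj | hj | hj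
  · -- j = 1 : impossible
    exfalso
    subst hj
    have hS : (∑ k ∈ Finset.Icc 1 (n - 3), q ^ (n - 2 - k) * dd η 1 n k) = 0 :=
      Finset.sum_eq_zero fun k hk => by
        simp only [Finset.mem_Icc] at hk
        simp only [dd]
        rw [if_neg (by omega), if_neg (by omega)]
        ring
    have hd2 : dd η 1 n (n - 2) = -2 := by
      simp only [dd]
      rw [if_neg (by omega)]
      simp
    have hd0 : dd η 1 n 0 = 2 * η := by
      simp only [dd]
      rw [if_neg (show ¬((0:ℕ) = n - 2) by omega)]
      simp
    rw [hS, hd2, hd0] at final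
    have final' : (q ^ (n - 1) + 1) * XX n x 0 = 2 * q - 2 * η := by linarith
    rcases hη with rfl | rfl
    · exact contraSmall q hq (n - 1) (by omega) (2 * q - 2 * 1) _ (by linarith)
        (by linarith) final'
    · exact contraSmall q hq (n - 1) (by omega) (2 * q - 2 * (-1)) _ (by linarith)
        (by linarith) final'
  · -- 2 ≤ j ≤ n - 2 : impossible
    exfalso
    have hS : (∑ k ∈ Finset.Icc 1 (n - 3), q ^ (n - 2 - k) * dd η j n k) =
        q ^ (n - 2 - (j - 1)) * (2 * η) := by
      rw [Finset.sum_eq_single_of_mem (j - 1)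
        (Finset.mem_Icc.mpr ⟨by omega, by omega⟩)]
      · congr 1
        simp only [dd]
        rw [if_neg (show ¬(j - 1 = n - 2) by omega)]
        simp
      · intro b hb hbne
        simp only [Finset.mem_Icc] at hb
        simp only [dd]
        rw [if_neg hbne, if_neg (by omega)]
        ring
    have hd2 : dd η j n (n - 2) = -2 := by
      simp only [dd]
      rw [if_neg (by omega)]
      simp
    have hd0 : dd η j n 0 = 0 := by
      simp only [dd]
      rw [if_neg (by omega), if_neg (by omega)]
      ring
    rw [hS, hd2, hd0] at final
    have hpow : q ^ (n - j) = q ^ (n - 2 - (j - 1)) * q := by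
      rw [← pow_succ]; congr 1; omega
    have final' : (q ^ (n - 1) + 1) * XX n x 0 = 2 * η * q ^ (n - j) + 2 * q := by
      rw [hpow]; linear_combination final
    exact contraMain q hq (n - 1) (by omega) η hη (n - j) (by omega) (by omega) _ final'
  · -- j = n - 1
    refine ⟨?_, hj⟩
    rcases hη with rfl | rfl
    · rfl
    · exfalso
      subst hj
      have hS : (∑ k ∈ Finset.Icc 1 (n - 3),
          q ^ (n - 2 - k) * dd (-1) (n - 1) n k) = 0 :=
        Finset.sum_eq_zero fun k hk => by
          simp only [Finset.mem_Icc] at hk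
          simp only [dd]
          rw [if_neg (by omega), if_neg (by omega)]
          ring
      have hd2 : dd (-1) (n - 1) n (n - 2) = -4 := by
        simp only [dd]
        rw [if_pos (show n - 2 = n - 1 - 1 by omega)]
        norm_num
      have hd0 : dd (-1) (n - 1) n 0 = 0 := by
        simp only [dd]
        rw [if_neg (by omega), if_neg (by omega)]
        ring
      rw [hS, hd2, hd0] at final
      have final' : (q ^ (n - 1) + 1) * XX n x 0 = 4 * q := by linarith
      exact contraSmall q hq (n - 1) (by omega) (4 * q) _ (by linarith)
        (by linarith) final'
end

section
/- Let n ≥ 4 be an integer and set m = n−1. Let W be the group of ℤ-linear automorphisms of ℤ^n of the form x ↦ (ε_{σ⁻¹(1)} x_{σ⁻¹(1)}, …, ε_{σ⁻¹(n)} x_{σ⁻¹(n)}) given by pairs (ε, σ) with σ a permutation of {1,…,n} and ε ∈ {±1}^n satisfying ε₁ε₂⋯εₙ = 1 (the Weyl group of type D_n, realized as signed permutation matrices with sign product 1). Let w' ∈ W be the element with permutation part the m-cycle (1 2 … m) and sign vector having −1 exactly in coordinates m and n. Then: (1) every element of W commuting with w' has permutation part equal to a power of the m-cycle (1 2 … m);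 and (2) the centralizer of w' in W has exactly 2(n−1) elements. -/
/-- The action of a signed permutation `(ε, σ)` on `ℤ^n`:
`x ↦ (ε_{σ⁻¹(1)} x_{σ⁻¹(1)}, …, ε_{σ⁻¹(n)} x_{σ⁻¹(n)})`. -/
def sgnPermAct (n : ℕ) (ε : Fin n → ℤ) (σ : Equiv.Perm (Fin n)) :
    (Fin n → ℤ) → (Fin n → ℤ) :=
  fun x i => ε (σ⁻¹ i) * x (σ⁻¹ i)

/-!
An element `(ε, σ)` of `W` commutes with `w' = (ε', c)` iff `σ c = c σ` and
`ε (c x) ε' x = ε' (σ x) ε x` for all `x`. The first condition makes `σ` fix the unique fixed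
point of `c`, and then `σ = c ^ k` with `k < m` read off from `σ 0`. The second determines `ε`
along the cycle from `ε 0`, and `∏ ε = 1` determines the last coordinate, so an element of the
centralizer is determined by `(k, ε 0)`. Both signs occur: `w' ^ k` and `w' ^ (m + k)` have
permutation part `c ^ k` and opposite signs at `0`, because the signs of `ε'` along the cycle
multiply to `-1`. Hence the centralizer is `{w' ^ j | j < 2 m}`.
-/

open Finset Equiv

section SignedPermutation

variable {n : ℕ}

theorem sgnPermAct_comp (ε η : Fin n → ℤ) (σ τ : Perm (Fin n)) :
    sgnPermAct n ε σ ∘ sgnPermAct n η τ =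
      sgnPermAct n (fun j => ε (τ j) * η j) (σ * τ) := by
  funext x i
  simp [sgnPermAct, mul_assoc]

theorem sgnPermAct_eq_sgnPermAct_iff {ε η : Fin n → ℤ} {σ τ : Perm (Fin n)}
    (hε : ∀ i, ε i ≠ 0) :
    sgnPermAct n ε σ = sgnPermAct n η τ ↔ ε = η ∧ σ = τ := by
  refine ⟨fun h => ?_, fun ⟨hεη, hστ⟩ => hεη ▸ hστ ▸ rfl⟩
  -- evaluate both sides on the basis vector `e_j` at the coordinate `σ j`
  have key (j : Fin n) :
      ε j = if τ.symm (σ j) = j then η (τ.symm (σ j)) else 0 := by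
    simpa [sgnPermAct, Pi.single_apply, apply_ite η] using
      congrFun (congrFun h (Pi.single j 1)) (σ j)
  have hστ (j : Fin n) : τ.symm (σ j) = j := by
    by_contra hj
    exact hε j (by simpa [hj] using key j)
  refine ⟨funext fun j => by simpa [hστ j] using key j, Equiv.ext fun j => ?_⟩
  simpa using congrArg τ (hστ j)

theorem sgnPermAct_comp_comm_iff {ε η : Fin n → ℤ} {σ τ : Perm (Fin n)}
    (hε : ∀ i, ε i ≠ 0) (hη : ∀ i, η i ≠ 0) :
    sgnPermAct n ε σ ∘ sgnPermAct n η τ = sgnPermAct n η τ ∘ sgnPermAct n ε σ ↔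
      σ * τ = τ * σ ∧ ∀ j, ε (τ j) * η j = η (σ j) * ε j := by
  rw [sgnPermAct_comp, sgnPermAct_comp,
    sgnPermAct_eq_sgnPermAct_iff fun j => mul_ne_zero (hε _) (hη _), funext_iff, and_comm]

theorem sgnPermAct_iterate (ε : Fin n → ℤ) (σ : Perm (Fin n)) (k : ℕ) :
    (sgnPermAct n ε σ)^[k] =
      sgnPermAct n (fun i => ∏ t ∈ range k, ε ((σ ^ t) i)) (σ ^ k) := by
  induction k with
  | zero => funext x i; simp [sgnPermAct]
  | succ k ih =>
    rw [Function.iterate_succ', ih, sgnPermAct_comp, pow_succ']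
    simp only [prod_range_succ, mul_comm]

theorem prod_pow_apply_eq_one_or {ε : Fin n → ℤ} (hε : ∀ i, ε i = 1 ∨ ε i = -1)
    (σ : Perm (Fin n)) (k : ℕ) (i : Fin n) :
    ∏ t ∈ range k, ε ((σ ^ t) i) = 1 ∨ ∏ t ∈ range k, ε ((σ ^ t) i) = -1 :=
  Int.isUnit_iff.1 <| prod_induction _ IsUnit (fun _ _ => IsUnit.mul) isUnit_one
    fun _ _ => Int.isUnit_iff.2 (hε _)

theorem prod_prod_pow_apply (ε : Fin n → ℤ) (σ : Perm (Fin n)) (k : ℕ) :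
    ∏ i, ∏ t ∈ range k, ε ((σ ^ t) i) = (∏ i, ε i) ^ k := by
  rw [prod_comm]
  simp [Equiv.prod_comp]

def weylD (n : ℕ) : Set ((Fin n → ℤ) → (Fin n → ℤ)) :=
  {f | ∃ (ε : Fin n → ℤ) (σ : Perm (Fin n)),
    (∀ i, ε i = 1 ∨ ε i = -1) ∧ ∏ i, ε i = 1 ∧ f = sgnPermAct n ε σ}

def centralizerWeylD (n : ℕ) (w : (Fin n → ℤ) → (Fin n → ℤ)) :
    Set ((Fin n → ℤ) → (Fin n → ℤ)) :=
  {f | f ∈ weylD n ∧ f ∘ w = w ∘ f}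

theorem sgnPermAct_iterate_mem_weylD {ε : Fin n → ℤ} (hε : ∀ i, ε i = 1 ∨ ε i = -1)
    (hprod : ∏ i, ε i = 1) (σ : Perm (Fin n)) (k : ℕ) :
    (sgnPermAct n ε σ)^[k] ∈ weylD n :=
  ⟨_, _, prod_pow_apply_eq_one_or hε σ k, by rw [prod_prod_pow_apply, hprod, one_pow],
    sgnPermAct_iterate ε σ k⟩

end SignedPermutation

theorem eq_of_prod_eq_of_castSucc {R : Type*} [CommRing R] [IsDomain R] {m : ℕ}
    {f g : Fin (m + 1) → R} (hf : ∀ i, f i ≠ 0) (hprod : ∏ i, f i = ∏ i, g i)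
    (hcast : ∀ i : Fin m, f i.castSucc = g i.castSucc) : f = g := by
  rw [Fin.prod_univ_castSucc, Fin.prod_univ_castSucc, ← funext hcast] at hprod
  have hlast := mul_left_cancel₀ (prod_ne_zero_iff.2 fun i _ => hf i.castSucc) hprod
  funext i
  rcases Fin.eq_castSucc_or_eq_last i with ⟨j, rfl⟩ | rfl
  exacts [hcast j, hlast]

/-- `c` is the cycle `(0 1 … m-1)` of `Fin (m + 1)`, the paper's `(1 2 … m)` in 0-based
indexing; it fixes `Fin.last m`. -/
def IsCycleBelow (m : ℕ) (c : Perm (Fin (m + 1))) : Prop :=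
  ∀ i : Fin (m + 1), (c i : ℕ) =
    if (i : ℕ) = m - 1 then 0 else if (i : ℕ) = m then (i : ℕ) else (i : ℕ) + 1

namespace IsCycleBelow

variable {m : ℕ} {c : Perm (Fin (m + 1))}

theorem apply_last (hc : IsCycleBelow m c) : c (Fin.last m) = Fin.last m := by
  ext
  rw [hc, Fin.val_last]
  split_ifs <;> omega

theorem val_pow_apply_zero (hc : IsCycleBelow m c) (hm : 0 < m) (t : ℕ) :
    ((c ^ t) 0 : ℕ) = t % m := by
  induction t with
  | zero => simp
  | succ t ih =>
    have := Nat.mod_lt t hm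
    rw [pow_succ', Perm.mul_apply, hc, ih, ← Nat.mod_add_mod t m 1]
    split_ifs with h₁ h₂
    · rw [h₁, Nat.sub_add_cancel hm, Nat.mod_self]
    · omega
    · rw [Nat.mod_eq_of_lt (a := t % m + 1) (by omega)]

theorem pow_val_apply_zero (hc : IsCycleBelow m c) {i : Fin (m + 1)} (hi : (i : ℕ) < m) :
    (c ^ (i : ℕ)) 0 = i :=
  Fin.ext <| by rw [hc.val_pow_apply_zero (by omega), Nat.mod_eq_of_lt hi]

theorem apply_eq_self_iff (hc : IsCycleBelow m c) (hm : 2 ≤ m) {i : Fin (m + 1)} :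
    c i = i ↔ i = Fin.last m := by
  refine ⟨fun h => ?_, fun h => h ▸ hc.apply_last⟩
  have hi := hc i
  rw [h] at hi
  ext
  rw [Fin.val_last]
  split_ifs at hi <;> omega

theorem eq_pow_of_commute (hc : IsCycleBelow m c) (hm : 2 ≤ m) {σ : Perm (Fin (m + 1))}
    (h : σ * c = c * σ) : (σ 0 : ℕ) < m ∧ σ = c ^ (σ 0 : ℕ) := by
  have hσc (t : ℕ) (x : Fin (m + 1)) : σ ((c ^ t) x) = (c ^ t) (σ x) := by
    rw [← Perm.mul_apply, (Commute.pow_right h t).eq, Perm.mul_apply]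
  -- `σ` permutes the fixed points of `c`, and `Fin.last m` is the only one
  have hlast : σ (Fin.last m) = Fin.last m :=
    (hc.apply_eq_self_iff hm).1 <| by simpa [hc.apply_last] using (hσc 1 (Fin.last m)).symm
  have hk : (σ 0 : ℕ) < m := Fin.val_lt_last fun h0 => by
    have := congrArg Fin.val (σ.injective (h0.trans hlast.symm))
    simp only [Fin.val_zero, Fin.val_last] at this
    omega
  refine ⟨hk, Equiv.ext fun i => ?_⟩
  by_cases hi : (i : ℕ) < m
  · calc σ i = σ ((c ^ (i : ℕ)) 0) := by rw [hc.pow_val_apply_zero hi]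
      _ = (c ^ (i : ℕ)) ((c ^ (σ 0 : ℕ)) 0) := by rw [hσc, hc.pow_val_apply_zero hk]
      _ = (c ^ (σ 0 : ℕ)) ((c ^ (i : ℕ)) 0) := by
        rw [← Perm.mul_apply, ← Perm.mul_apply, ← pow_add, ← pow_add, add_comm (i : ℕ)]
      _ = (c ^ (σ 0 : ℕ)) i := by rw [hc.pow_val_apply_zero hi]
  · obtain rfl : i = Fin.last m := Fin.ext (by simp only [Fin.val_last]; omega)
    rw [hlast, Perm.pow_apply_eq_self_of_apply_eq_self hc.apply_last]

theorem sgnPermAct_eq_of_commute (hc : IsCycleBelow m c) (hm : 2 ≤ m)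
    {ε' ε δ : Fin (m + 1) → ℤ} {σ τ : Perm (Fin (m + 1))} (hε' : ∀ i, ε' i ≠ 0)
    (hε : ∀ i, ε i ≠ 0) (hδ : ∀ i, δ i ≠ 0) (hprod : ∏ i, ε i = ∏ i, δ i)
    (hσ : sgnPermAct (m + 1) ε σ ∘ sgnPermAct (m + 1) ε' c =
      sgnPermAct (m + 1) ε' c ∘ sgnPermAct (m + 1) ε σ)
    (hτ : sgnPermAct (m + 1) δ τ ∘ sgnPermAct (m + 1) ε' c =
      sgnPermAct (m + 1) ε' c ∘ sgnPermAct (m + 1) δ τ)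
    (h0 : σ 0 = τ 0) (hε0 : ε 0 = δ 0) :
    sgnPermAct (m + 1) ε σ = sgnPermAct (m + 1) δ τ := by
  obtain ⟨hσc, hεc⟩ := (sgnPermAct_comp_comm_iff hε hε').1 hσ
  obtain ⟨hτc, hδc⟩ := (sgnPermAct_comp_comm_iff hδ hε').1 hτ
  obtain rfl : σ = τ := by
    rw [(hc.eq_pow_of_commute hm hσc).2, (hc.eq_pow_of_commute hm hτc).2, h0]
  -- `ε (c x) ε' x = ε' (σ x) ε x` propagates `ε 0 = δ 0` along the cycle
  have hcycle (t : ℕ) : ε ((c ^ t) 0) = δ ((c ^ t) 0) := by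
    induction t with
    | zero => simpa using hε0
    | succ t ih =>
      rw [pow_succ', Perm.mul_apply]
      exact mul_right_cancel₀ (hε' _) (by rw [hεc, hδc, ih])
  congr 1
  refine eq_of_prod_eq_of_castSucc hε hprod fun i => ?_
  have hi := hc.pow_val_apply_zero (i := i.castSucc) i.isLt
  rw [Fin.val_castSucc] at hi
  rw [← hi, hcycle]

end IsCycleBelow

def twistSign (m : ℕ) : Fin (m + 1) → ℤ :=
  fun i => if (i : ℕ) = m - 1 ∨ (i : ℕ) = m then -1 else 1

theorem twistSign_eq_one_or (m : ℕ) (i : Fin (m + 1)) :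
    twistSign m i = 1 ∨ twistSign m i = -1 := by
  unfold twistSign
  split_ifs <;> simp

theorem twistSign_ne_zero (m : ℕ) (i : Fin (m + 1)) : twistSign m i ≠ 0 :=
  (Int.isUnit_iff.2 (twistSign_eq_one_or m i)).ne_zero

theorem prod_twistSign {m : ℕ} (hm : 0 < m) : ∏ i, twistSign m i = 1 := by
  obtain ⟨k, rfl⟩ : ∃ k, m = k + 1 := ⟨m - 1, by omega⟩
  have hinit : ∏ i : Fin k, twistSign (k + 1) i.castSucc.castSucc = 1 :=
    prod_eq_one fun i _ => if_neg (by simp only [Fin.val_castSucc]; omega)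
  rw [Fin.prod_univ_castSucc, Fin.prod_univ_castSucc, hinit]
  simp [twistSign]

def twistedCycle (m : ℕ) (c : Perm (Fin (m + 1))) :
    (Fin (m + 1) → ℤ) → (Fin (m + 1) → ℤ) :=
  sgnPermAct (m + 1) (twistSign m) c

theorem iterate_twistedCycle_mem_centralizerWeylD {m : ℕ} (hm : 0 < m)
    (c : Perm (Fin (m + 1))) (j : ℕ) :
    (twistedCycle m c)^[j] ∈ centralizerWeylD (m + 1) (twistedCycle m c) :=
  ⟨sgnPermAct_iterate_mem_weylD (twistSign_eq_one_or m) (prod_twistSign hm) c j,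
    funext fun x => (Function.Commute.self_iterate _ j x).symm⟩

namespace IsCycleBelow

variable {m : ℕ} {c : Perm (Fin (m + 1))}

theorem pow_cond_add_apply_zero (hc : IsCycleBelow m c) (b : Bool) (k : Fin m) :
    (c ^ ((if b then m else 0) + k)) 0 = k.castSucc := by
  refine Fin.ext ?_
  rw [hc.val_pow_apply_zero k.pos, Fin.val_castSucc]
  cases b <;> simp [Nat.mod_eq_of_lt k.isLt]

theorem prod_range_twistSign (hc : IsCycleBelow m c) (hm : 0 < m) :
    ∏ t ∈ range m, twistSign m ((c ^ t) 0) = -1 := by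
  have (t : ℕ) (ht : t ∈ range m) :
      twistSign m ((c ^ t) 0) = if t = m - 1 then -1 else 1 := by
    have := mem_range.1 ht
    simp only [twistSign, hc.val_pow_apply_zero hm, Nat.mod_eq_of_lt this]
    congr 1
    simp only [eq_iff_iff]
    omega
  rw [prod_congr rfl this, prod_ite_eq']
  simp [hm]

theorem prod_range_cond_add_twistSign (hc : IsCycleBelow m c) (hm : 0 < m) (b : Bool)
    (k : ℕ) :
    ∏ t ∈ range ((if b then m else 0) + k), twistSign m ((c ^ t) 0) =
      (if b then -1 else 1) * ∏ t ∈ range k, twistSign m ((c ^ t) 0) := by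
  have hshift (t : ℕ) : (c ^ (m + t)) 0 = (c ^ t) 0 :=
    Fin.ext <| by rw [hc.val_pow_apply_zero hm, hc.val_pow_apply_zero hm, Nat.add_mod_left]
  cases b
  · simp
  · simp only [if_true, prod_range_add, hc.prod_range_twistSign hm, hshift]

theorem centralizerWeylD_eq_range (hc : IsCycleBelow m c) (hm : 2 ≤ m) :
    centralizerWeylD (m + 1) (twistedCycle m c) =
      Set.range fun p : Fin m × Bool => (twistedCycle m c)^[(if p.2 then m else 0) + p.1] := by
  ext f
  constructor
  · rintro ⟨⟨ε, σ, hε, hprod, rfl⟩, hcomm⟩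
    have hε0 (i : Fin (m + 1)) : ε i ≠ 0 := (Int.isUnit_iff.2 (hε i)).ne_zero
    obtain ⟨hk, -⟩ := hc.eq_pow_of_commute hm
      ((sgnPermAct_comp_comm_iff hε0 (twistSign_ne_zero m)).1 hcomm).1
    obtain ⟨b, hb⟩ : ∃ b : Bool,
        (if b then -1 else 1) * ∏ t ∈ range (σ 0 : ℕ), twistSign m ((c ^ t) 0) = ε 0 := by
      rcases hε 0 with h | h <;>
        rcases prod_pow_apply_eq_one_or (twistSign_eq_one_or m) c (σ 0 : ℕ) 0 with h' | h'
      exacts [⟨false, by simp [h, h']⟩, ⟨true, by simp [h, h']⟩,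
        ⟨true, by simp [h, h']⟩, ⟨false, by simp [h, h']⟩]
    refine ⟨(⟨σ 0, hk⟩, b), ?_⟩
    have hmem := iterate_twistedCycle_mem_centralizerWeylD (by omega) c
      ((if b then m else 0) + σ 0)
    simp only [twistedCycle, sgnPermAct_iterate, centralizerWeylD] at hmem ⊢
    refine hc.sgnPermAct_eq_of_commute hm (twistSign_ne_zero m)
      (fun _ => prod_ne_zero_iff.2 fun _ _ => twistSign_ne_zero m _) hε0
      (by rw [prod_prod_pow_apply, prod_twistSign (by omega), one_pow, hprod]) hmem.2 hcomm
      (hc.pow_cond_add_apply_zero b ⟨σ 0, hk⟩) ?_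
    rw [hc.prod_range_cond_add_twistSign (by omega), hb]
  · rintro ⟨p, rfl⟩
    exact iterate_twistedCycle_mem_centralizerWeylD (by omega) c _

theorem injective_iterate_twistedCycle (hc : IsCycleBelow m c) (hm : 0 < m) :
    Function.Injective fun p : Fin m × Bool =>
      (twistedCycle m c)^[(if p.2 then m else 0) + p.1] := by
  rintro ⟨k, b⟩ ⟨l, b'⟩ h
  simp only [twistedCycle, sgnPermAct_iterate] at h
  obtain ⟨hζ, hpow⟩ := (sgnPermAct_eq_sgnPermAct_iff
    fun _ => prod_ne_zero_iff.2 fun _ _ => twistSign_ne_zero m _).1 h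
  obtain rfl : k = l := by
    have h0 := congrArg (· 0) hpow
    simp only [hc.pow_cond_add_apply_zero] at h0
    exact Fin.castSucc_injective _ h0
  have h0 := congrFun hζ 0
  simp only [hc.prod_range_cond_add_twistSign hm] at h0
  have hb := mul_right_cancel₀ (prod_ne_zero_iff.2 fun _ _ => twistSign_ne_zero m _) h0
  cases b <;> cases b' <;> simp_all

theorem ncard_centralizerWeylD (hc : IsCycleBelow m c) (hm : 2 ≤ m) :
    (centralizerWeylD (m + 1) (twistedCycle m c)).ncard = 2 * m := by
  rw [hc.centralizerWeylD_eq_range hm,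
    Set.ncard_range_of_injective (hc.injective_iterate_twistedCycle (by omega)),
    Nat.card_eq_fintype_card, Fintype.card_prod, Fintype.card_fin, Fintype.card_bool, mul_comm]

end IsCycleBelow

/-- Let `n ≥ 4`, `m = n − 1`, and let `W` be the Weyl group of type `Dₙ`,
realized as the signed permutations `(ε, σ)` of `ℤ^n` with `ε₁⋯εₙ = 1`.
Let `w' ∈ W` have permutation part the `m`-cycle `c = (1 2 … m)` and sign
vector `ε'` with `−1` exactly in coordinates `m` and `n`. Then
(1) every element of `W` commuting with `w'` has permutation part a power of
`c`, and (2) the centralizer of `w'` in `W` has exactly `2(n−1)` elements. -/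
theorem stmt_10 (n : ℕ) (hn : 4 ≤ n)
    (c : Equiv.Perm (Fin n))
    (hc : ∀ i : Fin n, (c i : ℕ) =
      if (i : ℕ) = n - 2 then 0 else if (i : ℕ) = n - 1 then (i : ℕ) else (i : ℕ) + 1)
    (ε' : Fin n → ℤ)
    (hε' : ∀ i : Fin n, ε' i = if (i : ℕ) = n - 2 ∨ (i : ℕ) = n - 1 then -1 else 1) :
    (∀ (ε : Fin n → ℤ) (σ : Equiv.Perm (Fin n)),
        (∀ i, ε i = 1 ∨ ε i = -1) → (∏ i, ε i) = 1 →
        sgnPermAct n ε σ ∘ sgnPermAct n ε' c = sgnPermAct n ε' c ∘ sgnPermAct n ε σ →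
        ∃ k : ℕ, σ = c ^ k) ∧
    Set.ncard {f : (Fin n → ℤ) → (Fin n → ℤ) |
        (∃ (ε : Fin n → ℤ) (σ : Equiv.Perm (Fin n)),
          (∀ i, ε i = 1 ∨ ε i = -1) ∧ (∏ i, ε i) = 1 ∧ f = sgnPermAct n ε σ) ∧
        f ∘ sgnPermAct n ε' c = sgnPermAct n ε' c ∘ f} = 2 * (n - 1) := by
  obtain ⟨m, rfl⟩ : ∃ m, n = m + 1 := ⟨n - 1, by omega⟩
  have hm : 2 ≤ m := by omega
  have hc' : IsCycleBelow m c := fun i => by simpa using hc i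
  obtain rfl : ε' = twistSign m := funext fun i => by simpa [twistSign] using hε' i
  refine ⟨fun ε σ hε _ hcomm => ?_, ?_⟩
  · have hε0 (i : Fin (m + 1)) : ε i ≠ 0 := (Int.isUnit_iff.2 (hε i)).ne_zero
    exact ⟨σ 0, (hc'.eq_pow_of_commute hm
      ((sgnPermAct_comp_comm_iff hε0 (twistSign_ne_zero m)).1 hcomm).1).2⟩
  · rw [Nat.add_sub_cancel]
    exact hc'.ncard_centralizerWeylD hm
end

section
/- Let n ≥ 4 and q ≥ 2 be integers. Let w̃ : ℤ^n → ℤ^n be the ℤ-linear map w̃(x₁, …, xₙ) = (−xₙ, x₁, …, x_{n−1}). Then for every sign η ∈ {1, −1} and every j with 1 ≤ j ≤ n: if 2η·e_j − 2eₙ lies in the image of the map x ↦ q·w̃(x) − x on ℤ^n, then η = 1 and j = n. -/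
set_option maxHeartbeats 1000000 in
/-- For `n ≥ 4`, `q ≥ 2`, a sign `η ∈ {1, −1}` and `1 ≤ j ≤ n`: if
`2η·e_j − 2eₙ` lies in the image of `x ↦ q·w̃(x) − x` on `ℤ^n`, where `w̃` is
the signed cyclic shift, then `η = 1` and `j = n` (the class of `2eₙ` is a
character in general position). -/
theorem stmt_16 (n : ℕ) [NeZero n] (hn : 4 ≤ n) (q : ℤ) (hq : 2 ≤ q)
    (η : ℤ) (hη : η = 1 ∨ η = -1) (j : ℕ) (hj1 : 1 ≤ j) (hj2 : j ≤ n)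
    (h : ∃ x : Fin n → ℤ,
      (fun i => q * signedShift n x i - x i) =
        Pi.single (⟨j - 1, by omega⟩ : Fin n) (2 * η)
          - Pi.single (⟨n - 1, by omega⟩ : Fin n) 2) :
    η = 1 ∧ j = n := by
  obtain ⟨x, hx⟩ := h
  have hn0 : 0 < n := by omega
  set R : ℕ → ℤ := fun k => (if k = j - 1 then 2 * η else 0) - (if k = n - 1 then 2 else 0)
    with hR
  have hcoord : ∀ (k : ℕ) (hk : k < n),
      q * signedShift n x ⟨k, hk⟩ - x ⟨k, hk⟩ = R k := by
    intro k hk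
    have := congrFun hx ⟨k, hk⟩
    simp only [Pi.sub_apply, Pi.single_apply, Fin.mk.injEq] at this
    simpa [hR] using this
  have h1n : 1 % n = 1 := Nat.mod_eq_of_lt (by omega)
  have hsub1 : ∀ (k : ℕ) (hk : k < n), 1 ≤ k →
      (⟨k, hk⟩ : Fin n) - 1 = ⟨k - 1, by omega⟩ := by
    intro k hk h1
    rw [Fin.sub_def]
    apply Fin.ext
    simp only [Fin.val_one', h1n]
    show (n - 1 + k) % n = k - 1
    have e : n - 1 + k = (k - 1) + n := by omega
    rw [e, Nat.add_mod_right]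
    exact Nat.mod_eq_of_lt (by omega)
  have hsub0 : (0 : Fin n) - 1 = ⟨n - 1, by omega⟩ := by
    rw [Fin.sub_def]
    apply Fin.ext
    simp only [Fin.val_one', h1n]
    show (n - 1 + (0 : Fin n).val) % n = n - 1
    simp [Nat.mod_eq_of_lt (show n - 1 < n by omega)]
  set X : ℕ → ℤ := fun k => if hk : k < n then x ⟨k, hk⟩ else 0 with hXdef
  have hXeq : ∀ (k : ℕ) (hk : k < n), X k = x ⟨k, hk⟩ := by
    intro k hk; simp [hXdef, hk]
  have hstep : ∀ k : ℕ, 1 ≤ k → k ≤ n - 1 → q * X (k - 1) - X k = R k := by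
    intro k h1 h2
    have hk : k < n := by omega
    have hthis := hcoord k hk
    have hne : (⟨k, hk⟩ : Fin n) ≠ 0 := by
      simp [Fin.ext_iff]; omega
    rw [signedShift] at hthis
    simp only [if_neg hne] at hthis
    rw [hsub1 k hk h1] at hthis
    rw [hXeq (k-1) (by omega), hXeq k hk]
    exact hthis
  have h0 : q * (- X (n - 1)) - X 0 = R 0 := by
    have hthis := hcoord 0 hn0
    have hz : (⟨0, hn0⟩ : Fin n) = 0 := by simp [Fin.ext_iff]
    rw [hz] at hthis
    rw [signedShift] at hthis
    simp only [if_pos rfl] at hthis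
    rw [hsub0] at hthis
    rw [hXeq (n-1) (by omega), hXeq 0 hn0, hz]
    exact hthis
  -- telescoping
  have tel := Finset.sum_range_sub (fun k => q ^ k * X (n - 1 - k)) (n - 1)
  simp only [Nat.sub_self, Nat.sub_zero, pow_zero, one_mul] at tel
  have tel2 : ∑ k ∈ Finset.range (n - 1), q ^ k * R (n - 1 - k)
      = q ^ (n - 1) * X 0 - X (n - 1) := by
    rw [← tel]
    apply Finset.sum_congr rfl
    intro k hk
    have hk' : k < n - 1 := Finset.mem_range.mp hk
    have e1 : n - 1 - (k + 1) = (n - 1 - k) - 1 := by omega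
    have hs := hstep (n - 1 - k) (by omega) (by omega)
    rw [e1, ← hs, pow_succ]
    ring
  have hqn : q * q ^ (n - 1) = q ^ n := by
    rw [← pow_succ']
    congr 1
    omega
  -- main identity
  have main : (q ^ n + 1) * X 0 =
      q * (∑ k ∈ Finset.range (n - 1), q ^ k * R (n - 1 - k)) - R 0 := by
    rw [tel2]
    linear_combination (-1 : ℤ) * h0 - X 0 * hqn
  have hq1 : (1:ℤ) ≤ q := by linarith
  have hq4 : q ^ 4 ≤ q ^ n := pow_le_pow_right₀ hq1 hn
  have hq0 : (0:ℤ) < q := by linarith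
  have hpn : (0:ℤ) < q ^ n + 1 := by positivity
  rcases eq_or_lt_of_le hj1 with hj | hj
  · -- j = 1 : contradiction
    exfalso
    have hsum : ∑ k ∈ Finset.range (n - 1), q ^ k * R (n - 1 - k) = -2 := by
      have hterm : ∀ k ∈ Finset.range (n - 1), q ^ k * R (n - 1 - k)
          = if k = 0 then -2 else 0 := by
        intro k hk
        have hk' : k < n - 1 := Finset.mem_range.mp hk
        have c1 : ¬ (n - 1 - k = j - 1) := by omega
        have c2 : (n - 1 - k = n - 1) ↔ (k = 0) := by omega
        simp only [hR]
        simp only [if_neg c1]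
        by_cases h0k : k = 0
        · rw [if_pos (c2.mpr h0k), if_pos h0k, h0k]; ring
        · rw [if_neg (fun hc => h0k (c2.mp hc)), if_neg h0k]; ring
      rw [Finset.sum_congr rfl hterm, Finset.sum_ite_eq' (Finset.range (n-1)) 0]
      rw [if_pos (Finset.mem_range.mpr (by omega))]
    have hR0 : R 0 = 2 * η := by
      rw [hR]
      have c1 : (0:ℕ) = j - 1 := by omega
      have c2 : ¬ ((0:ℕ) = n - 1) := by omega
      simp only [if_pos c1, if_neg c2]
      ring
    rw [hsum, hR0] at main
    -- main : (q^n+1) * X 0 = q * -2 - 2η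
    have h8 : (8:ℤ) ≤ q ^ 3 := by
      calc (8:ℤ) = 2 ^ 3 := by norm_num
        _ ≤ q ^ 3 := pow_le_pow_left₀ (by norm_num) hq 3
    have h8q : 8 * q ≤ q ^ n := by
      calc 8 * q ≤ q ^ 3 * q := mul_le_mul_of_nonneg_right h8 (by linarith)
        _ = q ^ 4 := by ring
        _ ≤ q ^ n := hq4
    rcases lt_trichotomy (X 0) 0 with hx0 | hx0 | hx0
    · have hle : X 0 ≤ -1 := by omega
      rcases hη with h1 | h1 <;> subst h1 <;> nlinarith [main, h8q, hpn, hle]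
    · rw [hx0, mul_zero] at main
      rcases hη with h1 | h1 <;> subst h1 <;> linarith
    · have hle : 1 ≤ X 0 := by omega
      rcases hη with h1 | h1 <;> subst h1 <;> nlinarith [main, h8q, hpn, hle]
  · -- j ≥ 2
    have hj2' : 2 ≤ j := hj
    have hsum : ∑ k ∈ Finset.range (n - 1), q ^ k * R (n - 1 - k)
        = 2 * η * q ^ (n - j) - 2 := by
      have hterm : ∀ k ∈ Finset.range (n - 1), q ^ k * R (n - 1 - k)
          = (if k = n - j then 2 * η * q ^ (n - j) else 0)
            + (if k = 0 then -2 else 0) := by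
        intro k hk
        have hk' : k < n - 1 := Finset.mem_range.mp hk
        have c1 : (n - 1 - k = j - 1) ↔ (k = n - j) := by omega
        have c2 : (n - 1 - k = n - 1) ↔ (k = 0) := by omega
        simp only [hR]
        by_cases ha : k = n - j <;> by_cases hb : k = 0
        · have hnj : n - j = 0 := by omega
          rw [if_pos (c1.mpr ha), if_pos (c2.mpr hb), if_pos ha, if_pos hb, hb, hnj]
          ring
        · rw [if_pos (c1.mpr ha), if_neg (fun hc => hb (c2.mp hc)), if_pos ha,
            if_neg hb, ha]
          ring
        · rw [if_neg (fun hc => ha (c1.mp hc)), if_pos (c2.mpr hb), if_neg ha,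
            if_pos hb, hb]
          ring
        · rw [if_neg (fun hc => ha (c1.mp hc)), if_neg (fun hc => hb (c2.mp hc)),
            if_neg ha, if_neg hb]
          ring
      rw [Finset.sum_congr rfl hterm, Finset.sum_add_distrib,
        Finset.sum_ite_eq' (Finset.range (n-1)) (n-j),
        Finset.sum_ite_eq' (Finset.range (n-1)) 0]
      rw [if_pos (Finset.mem_range.mpr (by omega)),
        if_pos (Finset.mem_range.mpr (by omega))]
      ring
    have hR0 : R 0 = 0 := by
      rw [hR]
      have c1 : ¬ ((0:ℕ) = j - 1) := by omega
      have c2 : ¬ ((0:ℕ) = n - 1) := by omega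
      simp only [if_neg c1, if_neg c2]
      ring
    rw [hsum, hR0] at main
    -- main : (q^n+1) * X 0 = q * (2η q^(n-j) - 2) - 0
    have hdvdq : q ∣ (q ^ n + 1) * X 0 := by
      rw [main]; exact ⟨2 * η * q ^ (n - j) - 2, by ring⟩
    have hcop : IsCoprime q (q ^ n + 1) :=
      ⟨-q ^ (n - 1), 1, by rw [neg_mul, mul_comm (q ^ (n-1)) q, hqn]; ring⟩
    have hdvd : q ∣ X 0 := hcop.dvd_of_dvd_mul_left hdvdq
    have hX0 : X 0 = 0 := by
      by_contra hne
      have habs : q ≤ |X 0| :=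
        Int.le_of_dvd (abs_pos.mpr hne) ((dvd_abs q (X 0)).mpr hdvd)
      have hlow : (q ^ n + 1) * q ≤ |(q ^ n + 1) * X 0| := by
        rw [abs_mul, abs_of_pos hpn]
        exact mul_le_mul_of_nonneg_left habs (by positivity)
      rw [main] at hlow
      have hηabs : |η| = 1 := by rcases hη with h1 | h1 <;> subst h1 <;> simp
      have hup : |q * (2 * η * q ^ (n - j) - 2) - 0| ≤ q * (2 * q ^ (n - j) + 2) := by
        rw [sub_zero, abs_mul, abs_of_pos hq0]
        apply mul_le_mul_of_nonneg_left _ (by positivity)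
        calc |2 * η * q ^ (n - j) - 2| ≤ |2 * η * q ^ (n - j)| + |(2:ℤ)| := abs_sub _ _
          _ = 2 * q ^ (n - j) + 2 := by
              rw [abs_mul, abs_mul, hηabs,
                abs_of_pos (pow_pos hq0 (n - j)), abs_of_pos (by norm_num : (0:ℤ) < 2)]
              ring
      have hple : q ^ (n - j) ≤ q ^ (n - 2) := pow_le_pow_right₀ hq1 (by omega)
      have hq2n : q ^ 2 * q ^ (n - 2) = q ^ n := by
        rw [← pow_add]; congr 1; omega
      have hp1 : (1:ℤ) ≤ q ^ (n - 2) := one_le_pow₀ hq1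
      have hq2 : (4:ℤ) ≤ q ^ 2 := by nlinarith
      nlinarith [hlow, hup, hple, hq2n, hp1, hq2, hq0]
    rw [hX0, mul_zero] at main
    have hkey : η * q ^ (n - j) = 1 := by
      have hz : q * (2 * (η * q ^ (n - j) - 1)) = 0 := by linarith [main]
      rcases mul_eq_zero.mp hz with hc | hc
      · exact absurd hc (by omega)
      · linarith
    have hpow : (0:ℤ) < q ^ (n - j) := pow_pos hq0 _
    rcases hη with h1 | h1
    · subst h1
      rw [one_mul] at hkey
      refine ⟨rfl, ?_⟩
      by_contra hjn
      have hge : 1 ≤ n - j := by omega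
      have hle := pow_le_pow_right₀ hq1 hge
      rw [pow_one, hkey] at hle
      linarith
    · exfalso
      subst h1
      nlinarith [hkey, hpow]
end
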